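/- Let γ₀ > 0, μ > 0, τ₀ > 0 with μ τ₀ ≤ 2, and define γ_{k+1} = γ_k (1 + μ τ_k) with τ_k = τ₀ √(γ₀/γ_k). Then for all k ≥ 0, γ_k ≤ γ₀ (k+1)². -/

import Mathlib

/-!
Writing `γ (k+1) = γ k + μ τ₀ √(γ₀ γ k)` and using `μ τ₀ ≤ 2`, one step gives
`γ (k+1) ≤ (√(γ k) + √γ₀)²`, i.e. `√(γ k)` grows by at most `√γ₀` per step; hence
`√(γ k) ≤ (k+1) √γ₀`.
-/

open Real

/-- For `x ≤ 0` both sides degenerate: `√(g / x) = 0`, so the left side is `x ≤ 0 ≤ g`. -/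
theorem mul_one_add_mul_sqrt_div_le_sq {g x c : ℝ} (hg : 0 ≤ g) (hc : c ≤ 2) :
    x * (1 + c * √(g / x)) ≤ (√x + √g) ^ 2 := by
  rcases le_or_gt x 0 with hx | hx
  · rw [sqrt_eq_zero'.mpr (div_nonpos_of_nonneg_of_nonpos hg hx), sqrt_eq_zero'.mpr hx]
    nlinarith [sq_sqrt hg]
  · have hsx : x * √(g / x) = √x * √g := by
      rw [sqrt_div' _ hx.le]
      field_simp
      rw [sq_sqrt hx.le, mul_comm]
    calc x * (1 + c * √(g / x)) = x + c * (√x * √g) := by rw [← hsx]; ring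
      _ ≤ x + 2 * (√x * √g) := by gcongr
      _ ≤ (√x + √g) ^ 2 := by nlinarith [sq_sqrt hx.le, sq_nonneg √g]

theorem sqrt_le_mul_sqrt_of_le_mul_sq {g x t : ℝ} (ht : 0 ≤ t) (h : x ≤ g * t ^ 2) :
    √x ≤ √g * t := by
  calc √x ≤ √(g * t ^ 2) := sqrt_le_sqrt h
    _ = √g * t := by rw [sqrt_mul' g (sq_nonneg t), sqrt_sq ht]

theorem stmt_1_general (γ₀ μ τ₀ : ℝ) (hγ₀ : γ₀ > 0)
    (hμτ : μ * τ₀ ≤ 2)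
    (γ τ : ℕ → ℝ) (h0 : γ 0 = γ₀)
    (hτ : ∀ k, τ k = τ₀ * Real.sqrt (γ₀ / γ k))
    (hrec : ∀ k, γ (k + 1) = γ k * (1 + μ * τ k)) :
    ∀ k : ℕ, γ k ≤ γ₀ * ((k : ℝ) + 1) ^ 2 := by
  intro k
  induction k with
  | zero => simp [h0]
  | succ n ih =>
    have hstep : γ (n + 1) = γ n * (1 + μ * τ₀ * √(γ₀ / γ n)) := by
      rw [hrec, hτ, mul_assoc]
    have hsqrt : √(γ n) ≤ √γ₀ * (n + 1) := sqrt_le_mul_sqrt_of_le_mul_sq (by positivity) ih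
    calc γ (n + 1) ≤ (√(γ n) + √γ₀) ^ 2 := hstep ▸ mul_one_add_mul_sqrt_div_le_sq hγ₀.le hμτ
      _ ≤ (√γ₀ * (n + 1) + √γ₀) ^ 2 := by gcongr
      _ = γ₀ * ((n + 1 : ℕ) + 1) ^ 2 := by
        push_cast; linear_combination ((n : ℝ) + 2) ^ 2 * sq_sqrt hγ₀.le

theorem stmt_1 (γ₀ μ τ₀ : ℝ) (hγ₀ : γ₀ > 0) (hμ : μ > 0) (hτ₀ : τ₀ > 0)
    (hμτ : μ * τ₀ ≤ 2)
    (γ τ : ℕ → ℝ) (h0 : γ 0 = γ₀)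
    (hτ : ∀ k, τ k = τ₀ * Real.sqrt (γ₀ / γ k))
    (hrec : ∀ k, γ (k + 1) = γ k * (1 + μ * τ k)) :
    ∀ k : ℕ, γ k ≤ γ₀ * ((k : ℝ) + 1) ^ 2 :=
  stmt_1_general γ₀ μ τ₀ hγ₀ hμτ γ τ h0 hτ hrec
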